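/- arXiv:2110.14852 — 2 statements merged into one kernel-verified Lean document; each statement's English description precedes it below -/
import Mathlib

section
/- Conditional expectation identity in law: for f ∈ L^1(γ) and t ≥ 0, the pair (Q_t f under γ) and (E[f(B_1) | F^B_{e^{−2t}}] under P) have the same law, where Q is the Ornstein–Uhlenbeck semigroup (Q_t f)(x) = ∫ f(e^{−t}x + √(1−e^{−2t}) y) γ(dy). -/
open MeasureTheory ProbabilityTheory Set Filter
open scoped ENNReal NNReal Topology

noncomputable section

abbrev Ed (d : ℕ) : Type := EuclideanSpace ℝ (Fin d)

variable {Ω : Type*}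

/-- The natural filtration (σ-algebra at time `t`) generated by the process `B`. -/
def natFiltration {d : ℕ} [MeasurableSpace Ω] (B : ℝ → Ω → Ed d) (t : ℝ) :
    MeasurableSpace Ω :=
  ⨆ s ∈ Set.Icc (0:ℝ) t, MeasurableSpace.comap (B s) inferInstance

/-- `B` is a standard `d`-dimensional Brownian motion under `P`. -/
structure IsStandardBM {d : ℕ} [MeasurableSpace Ω] (P : Measure Ω) (B : ℝ → Ω → Ed d) :
    Prop where
  measurable : ∀ t, Measurable (B t)
  start : ∀ᵐ ω ∂P, B 0 ω = 0
  cont : ∀ᵐ ω ∂P, Continuous fun t => B t ω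
  indep_past : ∀ s t : ℝ, 0 ≤ s → s ≤ t →
    Indep (MeasurableSpace.comap (fun ω => B t ω - B s ω) inferInstance)
      (natFiltration B s) P
  gauss_coord : ∀ s t : ℝ, 0 ≤ s → s ≤ t → ∀ i : Fin d,
    Measure.map (fun ω => B t ω i - B s ω i) P = gaussianReal 0 (Real.toNNReal (t - s))
  coord_indep : ∀ s t : ℝ, 0 ≤ s → s ≤ t →
    iIndepFun (m := fun _ : Fin d => (inferInstance : MeasurableSpace ℝ))
      (fun i ω => B t ω i - B s ω i) P

/-- A process `v` is progressively measurable with respect to the natural filtration of `B`. -/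
def ProgMeasDrift {d : ℕ} [MeasurableSpace Ω] (B v : ℝ → Ω → Ed d) : Prop :=
  ∀ t : ℝ,
    StronglyMeasurable[(inferInstance : MeasurableSpace (Set.Iic t)).prod (natFiltration B t)]
      (fun p : Set.Iic t × Ω => v p.1 p.2)

/-- The energy `E[∫_0^∞ |v_t|^2 dt]` of a drift. -/
def energy {d : ℕ} [MeasurableSpace Ω] (P : Measure Ω) (v : ℝ → Ω → Ed d) : ℝ≥0∞ :=
  ∫⁻ ω, (∫⁻ t in Set.Ioi (0:ℝ), (‖v t ω‖₊ : ℝ≥0∞) ^ 2) ∂P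

/-- The standard Gaussian measure on `ℝ^d`. -/
def stdGaussian (d : ℕ) : Measure (Ed d) :=
  Measure.map (fun x : Fin d → ℝ => (WithLp.equiv 2 (Fin d → ℝ)).symm x)
    (Measure.pi fun _ : Fin d => gaussianReal 0 1)

/-- The Ornstein–Uhlenbeck semigroup `(Q_t f)(x) = ∫ f(e^{-t} x + √(1-e^{-2t}) y) γ(dy)`. -/
def OUsg {d : ℕ} (t : ℝ) (f : Ed d → ℝ) (x : Ed d) : ℝ :=
  ∫ y, f (Real.exp (-t) • x + Real.sqrt (1 - Real.exp (-2*t)) • y) ∂(stdGaussian d)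

/-!
Put `s = e^{-2t}` and split `B 1 = B s + (B 1 - B s)`. The first summand is
`𝓕^B_s`-measurable with law `√s • γ = e^{-t} • γ`; the increment is independent of `𝓕^B_s`
with law `√(1 - s) • γ`. Freezing the measurable summand gives
`E[f(B 1) | 𝓕^B_s] = g(B s)` with `g x = ∫ f(x + √(1 - e^{-2t}) • y) dγ(y)`, and
`g (e^{-t} • x) = Q_t f x`, so both sides are the image of `γ` under `Q_t f`.
-/

namespace ProbabilityTheory

variable {Ω α β : Type*} {m m₀ : MeasurableSpace Ω} {P : Measure Ω}
  [MeasurableSpace α] [MeasurableSpace β] {W : Ω → α} {D : Ω → β} {H : α × β → ℝ}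

lemma Indep.indepFun_of_measurable {γ : Type*} [MeasurableSpace γ] {V : Ω → γ}
    (hind : Indep (MeasurableSpace.comap D inferInstance) m P) (hV : Measurable[m] V) :
    IndepFun V D P :=
  (IndepFun_iff_Indep V D P).2 (indep_of_indep_of_le_left hind.symm (Measurable.comap_le hV))

variable [IsProbabilityMeasure P]

lemma IndepFun.integrable_prod_map (hW : Measurable W) (hD : Measurable D) (hWD : IndepFun W D P)
    (hH : Measurable H) (hint : Integrable (fun ω => H (W ω, D ω)) P) :
    Integrable H ((P.map W).prod (P.map D)) := by
  rwa [← hWD.map_prod_eq_prod_map_map hW.aemeasurable hD.aemeasurable,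
    integrable_map_measure hH.aestronglyMeasurable (hW.prodMk hD).aemeasurable]

lemma IndepFun.integral_comp_prodMk (hW : Measurable W) (hD : Measurable D)
    (hWD : IndepFun W D P) (hH : Measurable H) (hint : Integrable (fun ω => H (W ω, D ω)) P) :
    ∫ ω, H (W ω, D ω) ∂P = ∫ ω, ∫ y, H (W ω, y) ∂(P.map D) ∂P := by
  calc ∫ ω, H (W ω, D ω) ∂P = ∫ p, H p ∂((P.map W).prod (P.map D)) := by
        rw [← hWD.map_prod_eq_prod_map_map hW.aemeasurable hD.aemeasurable,
          integral_map (hW.prodMk hD).aemeasurable hH.aestronglyMeasurable]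
    _ = ∫ x, ∫ y, H (x, y) ∂(P.map D) ∂(P.map W) :=
        integral_prod _ (hWD.integrable_prod_map hW hD hH hint)
    _ = ∫ ω, ∫ y, H (W ω, y) ∂(P.map D) ∂P :=
        integral_map hW.aemeasurable
          hH.stronglyMeasurable.integral_prod_right'.aestronglyMeasurable

lemma IndepFun.integrable_integral_comp_prodMk (hW : Measurable W) (hD : Measurable D)
    (hWD : IndepFun W D P) (hH : Measurable H) (hint : Integrable (fun ω => H (W ω, D ω)) P) :
    Integrable (fun ω => ∫ y, H (W ω, y) ∂(P.map D)) P :=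
  (integrable_map_measure hH.stronglyMeasurable.integral_prod_right'.aestronglyMeasurable
    hW.aemeasurable).1 (hWD.integrable_prod_map hW hD hH hint).integral_prod_left

theorem condExp_ae_eq_integral_of_indep (hm : m ≤ m₀)
    (hW : Measurable[m] W) (hD : Measurable D)
    (hind : Indep (MeasurableSpace.comap D inferInstance) m P) (hH : Measurable H)
    (hint : Integrable (fun ω => H (W ω, D ω)) P) :
    P[fun ω => H (W ω, D ω)|m] =ᵐ[P] fun ω => ∫ y, H (W ω, y) ∂(P.map D) := by
  refine (ae_eq_condExp_of_forall_setIntegral_eq hm hint (fun A _ _ => ?_) (fun A hA _ => ?_)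
    ?_).symm
  · exact (hind.indepFun_of_measurable hW).integrable_integral_comp_prodMk (hW.mono hm le_rfl) hD
      hH hint |>.integrableOn
  · -- Adjoining `1_A` to `W` keeps it `m`-measurable, hence independent of `D`.
    set V : Ω → α × ℝ := fun ω => (W ω, A.indicator 1 ω)
    have hV : Measurable[m] V := hW.prodMk (measurable_const.indicator hA)
    have hA₀ : MeasurableSet A := hm A hA
    have indicator_mul (g : Ω → ℝ) : (fun ω => A.indicator 1 ω * g ω) = A.indicator g :=
      funext fun ω => by simpa using (Set.indicator_mul_left A 1 g).symm
    have hK : Measurable fun p : (α × ℝ) × β => p.1.2 * H (p.1.1, p.2) :=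
      measurable_fst.snd.mul (hH.comp (measurable_fst.fst.prodMk measurable_snd))
    have hKint : Integrable (fun ω => (V ω).2 * H ((V ω).1, D ω)) P := by
      simpa only [V, indicator_mul (fun ω => H (W ω, D ω))] using hint.indicator hA₀
    calc ∫ ω in A, ∫ y, H (W ω, y) ∂(P.map D) ∂P
        = ∫ ω, ∫ y, (V ω).2 * H ((V ω).1, y) ∂(P.map D) ∂P := by
          simp only [V, integral_const_mul]
          rw [indicator_mul, integral_indicator hA₀]
      _ = ∫ ω, (V ω).2 * H ((V ω).1, D ω) ∂P :=
          ((hind.indepFun_of_measurable hV).integral_comp_prodMk (hV.mono hm le_rfl) hD hK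
            hKint).symm
      _ = ∫ ω in A, H (W ω, D ω) ∂P := by
          rw [indicator_mul (fun ω => H (W ω, D ω)), integral_indicator hA₀]
  · exact (hH.stronglyMeasurable.integral_prod_right'.comp_measurable hW).aestronglyMeasurable

end ProbabilityTheory

section Gaussian

variable {d : ℕ}

lemma measurable_withLpEquiv_symm :
    Measurable fun x : Fin d → ℝ => (WithLp.equiv 2 (Fin d → ℝ)).symm x :=
  (MeasurableEquiv.toLp 2 (Fin d → ℝ)).measurable

lemma stdGaussian_map_sqrt_smul (v : ℝ≥0) :
    (stdGaussian d).map (fun x => Real.sqrt v • x) =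
      (Measure.pi fun _ : Fin d => gaussianReal 0 v).map
        (fun x : Fin d → ℝ => (WithLp.equiv 2 (Fin d → ℝ)).symm x) := by
  have hscale : (gaussianReal 0 1).map (Real.sqrt v * ·) = gaussianReal 0 v := by
    rw [gaussianReal_map_const_mul, mul_zero, mul_one]
    congr 1
    exact NNReal.eq (Real.sq_sqrt v.2)
  rw [_root_.stdGaussian, Measure.map_map (by fun_prop) measurable_withLpEquiv_symm,
    show (fun x : Ed d => Real.sqrt v • x) ∘ (fun x : Fin d → ℝ => (WithLp.equiv 2 _).symm x) =
      (fun x => (WithLp.equiv 2 _).symm x) ∘ (fun x i => Real.sqrt v * x i) from rfl,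
    ← Measure.map_map measurable_withLpEquiv_symm (by fun_prop),
    Measure.pi_map_pi fun _ => (measurable_const_mul _).aemeasurable, hscale]

end Gaussian

section BrownianMotion

variable {Ω : Type*} [MeasurableSpace Ω] {d : ℕ} {B : ℝ → Ω → Ed d}

lemma measurable_natFiltration_self {t : ℝ} (ht : 0 ≤ t) : Measurable[natFiltration B t] (B t) :=
  Measurable.of_comap_le <| le_iSup₂ (f := fun s (_ : s ∈ Icc 0 t) =>
    MeasurableSpace.comap (B s) inferInstance) t ⟨ht, le_rfl⟩

variable {P : Measure Ω}

namespace IsStandardBM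

lemma natFiltration_le (hB : IsStandardBM P B) (t : ℝ) : natFiltration B t ≤ ‹_› :=
  iSup₂_le fun s _ => (hB.measurable s).comap_le

lemma map_sub (hB : IsStandardBM P B) {a b : ℝ} (ha : 0 ≤ a) (hab : a ≤ b) :
    P.map (fun ω => B b ω - B a ω) = (stdGaussian d).map (fun x => Real.sqrt (b - a) • x) := by
  have hcoord (i : Fin d) : Measurable fun ω => B b ω i - B a ω i := by
    have := hB.measurable; fun_prop
  calc P.map (fun ω => B b ω - B a ω)
      = (P.map fun ω i => B b ω i - B a ω i).map
          (fun x : Fin d → ℝ => (WithLp.equiv 2 (Fin d → ℝ)).symm x) := by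
        rw [Measure.map_map measurable_withLpEquiv_symm (measurable_pi_lambda _ hcoord)]
        rfl
    _ = (Measure.pi fun _ : Fin d => gaussianReal 0 (b - a).toNNReal).map
          (fun x : Fin d → ℝ => (WithLp.equiv 2 (Fin d → ℝ)).symm x) := by
        rw [(hB.coord_indep a b ha hab).map_fun_eq_pi_map fun i => (hcoord i).aemeasurable]
        simp_rw [hB.gauss_coord a b ha hab]
    _ = (stdGaussian d).map (fun x => Real.sqrt (b - a) • x) := by
        have h := stdGaussian_map_sqrt_smul (d := d) (b - a).toNNReal
        rw [Real.coe_toNNReal _ (sub_nonneg.2 hab)] at h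
        exact h.symm

lemma map_eq (hB : IsStandardBM P B) {t : ℝ} (ht : 0 ≤ t) :
    P.map (B t) = (stdGaussian d).map (fun x => Real.sqrt t • x) := by
  have hstart : B t =ᵐ[P] fun ω => B t ω - B 0 ω := hB.start.mono fun ω h => by simp [h]
  rw [Measure.map_congr hstart, hB.map_sub le_rfl ht, sub_zero]

lemma map_one (hB : IsStandardBM P B) : P.map (B 1) = stdGaussian d := by
  simp [hB.map_eq zero_le_one]

end IsStandardBM

end BrownianMotion

lemma OUsg_eq_integral_map {d : ℕ} {f : Ed d → ℝ} (hf : Measurable f) (t : ℝ) (x : Ed d) :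
    OUsg t f x = ∫ y, f (Real.exp (-t) • x + y)
      ∂((stdGaussian d).map fun y => Real.sqrt (1 - Real.exp (-(2 * t))) • y) := by
  rw [OUsg, integral_map (by fun_prop) ?_, neg_mul]
  exact (hf.comp (measurable_const_add _)).aestronglyMeasurable

lemma Real.sqrt_exp_neg_two_mul (t : ℝ) : Real.sqrt (Real.exp (-(2 * t))) = Real.exp (-t) := by
  rw [show -(2 * t) = -t + -t by ring, Real.exp_add, Real.sqrt_mul_self (Real.exp_pos _).le]

/-- **Conditional expectation identity in law** (Section 3): for `f ∈ L¹(γ)` and `t ≥ 0`,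
`Q_t f` under `γ` has the same law as `E[f(B₁) | 𝓕^B_{e^{-2t}}]` under `P`. -/
theorem ou_eq_condexp_law {d : ℕ} [MeasurableSpace Ω] (P : Measure Ω)
    [IsProbabilityMeasure P] (B : ℝ → Ω → Ed d) (hB : IsStandardBM P B)
    (t : ℝ) (ht : 0 ≤ t) (f : Ed d → ℝ) (hf : Measurable f)
    (hf1 : Integrable f (stdGaussian d)) :
    Measure.map (OUsg t f) (stdGaussian d) =
      Measure.map (P[(fun ω => f (B 1 ω))|natFiltration B (Real.exp (-(2*t)))]) P := by
  set s := Real.exp (-(2 * t))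
  have hs0 : 0 ≤ s := (Real.exp_pos _).le
  have hs1 : s ≤ 1 := Real.exp_le_one_iff.2 (by linarith)
  have hfB : Integrable (fun ω => f (B 1 ω)) P := by
    rw [← hB.map_one] at hf1
    exact hf1.comp_measurable (hB.measurable 1)
  have hadd : Measurable fun p : Ed d × Ed d => f (p.1 + p.2) := hf.comp measurable_add
  set g := fun x => ∫ y, f (x + y) ∂(P.map fun ω => B 1 ω - B s ω)
  have hcond : P[fun ω => f (B 1 ω)|natFiltration B s] =ᵐ[P] fun ω => g (B s ω) := by
    simpa only [add_sub_cancel] using condExp_ae_eq_integral_of_indep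
      (D := fun ω => B 1 ω - B s ω) (hB.natFiltration_le s)
      (measurable_natFiltration_self hs0) ((hB.measurable 1).sub (hB.measurable s))
      (hB.indep_past s 1 hs0 hs1) hadd (by simpa only [add_sub_cancel] using hfB)
  have hg : Measurable g := hadd.stronglyMeasurable.integral_prod_right'.measurable
  rw [Measure.map_congr hcond, show (fun ω => g (B s ω)) = g ∘ B s from rfl,
    ← Measure.map_map hg (hB.measurable s), hB.map_eq hs0, Measure.map_map hg (by fun_prop)]
  congr 1
  funext x
  simp only [Function.comp, g, hB.map_sub hs0 hs1, OUsg_eq_integral_map hf,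
    Real.sqrt_exp_neg_two_mul, s]
end
end

section
/- If G_n → G in L^2(ν) for a finite measure ν with dν = (1+F_-)d𝕎 for a probability measure 𝕎, and the G_n are probability densities with respect to 𝕎, then G_n log G_n → G log G in L^1(𝕎); i.e., the entropies ∫ G_n log G_n d𝕎 converge to ∫ G log G d𝕎. -/
open MeasureTheory Filter
open scoped ENNReal Topology

/-! For `φ t = t log t` and `a, b ≥ 0`,
`|φ a - φ b| ≤ 2 √|a - b| + |a - b| (1 + log (1 + a) + log (1 + b))`: from below by the
superadditivity `φ b + φ (a - b) ≤ φ a` and `φ t ≥ -2 √t`, from above by the tangent line of the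
convex `φ` at the larger point. Since `log (1 + t) ≤ 2 √t`, the weight `log (1 + g)` of a
probability density `g` has `L²(𝕎)`-norm at most `2`, so Hölder's inequality turns the pointwise
bound into `‖φ ∘ Gₙ - φ ∘ G‖_{L¹(𝕎)} ≤ 2 ‖Gₙ - G‖_{L²(𝕎)} ^ (1/2) + 5 ‖Gₙ - G‖_{L²(𝕎)}`, a
quantitative substitute for Vitali's theorem; and `‖·‖_{L²(𝕎)} ≤ ‖·‖_{L²(ν)}` since `ν ≥ 𝕎`. -/

namespace Real

lemma mul_log_add_mul_log_le {a b : ℝ} (ha : 0 ≤ a) (hb : 0 ≤ b) :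
    a * log a + b * log b ≤ (a + b) * log (a + b) := by
  have hmono : ∀ {s t : ℝ}, 0 ≤ s → 0 ≤ t → s * log s ≤ s * log (s + t) := by
    intro s t hs ht
    rcases hs.eq_or_lt with rfl | hs
    · simp
    · exact mul_le_mul_of_nonneg_left (log_le_log hs (by linarith)) hs.le
  linarith [hmono ha hb, add_comm a b ▸ hmono hb ha]

lemma neg_two_mul_sqrt_le_mul_log {t : ℝ} (ht : 0 ≤ t) : -(2 * √t) ≤ t * log t := by
  rcases ht.eq_or_lt with rfl | ht
  · simp
  set s := √t
  have hs : 0 < s := sqrt_pos.mpr ht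
  have hts : t = s ^ 2 := (sq_sqrt ht.le).symm
  have hlog : 1 - s⁻¹ ≤ log s := one_sub_inv_le_log_of_pos hs
  rw [hts, log_pow, Nat.cast_ofNat]
  have hinv : s * s⁻¹ = 1 := mul_inv_cancel₀ hs.ne'
  nlinarith [mul_le_mul_of_nonneg_left hlog (sq_nonneg s)]

lemma log_one_add_le_two_mul_sqrt {t : ℝ} (ht : 0 ≤ t) : log (1 + t) ≤ 2 * √t := by
  have hs := sqrt_nonneg t
  calc log (1 + t) ≤ log ((1 + √t) ^ 2) :=
        log_le_log (by positivity) (by nlinarith [sq_sqrt ht])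
    _ = 2 * log (1 + √t) := by rw [log_pow, Nat.cast_ofNat]
    _ ≤ 2 * √t := by linarith [log_le_sub_one_of_pos (show 0 < 1 + √t by positivity)]

lemma mul_log_sub_mul_log_le {a b : ℝ} (hb : 0 ≤ b) (hba : b ≤ a) :
    a * log a - b * log b ≤ (a - b) * (1 + log (1 + a)) := by
  rcases (hb.trans hba).eq_or_lt with rfl | ha
  · obtain rfl : b = 0 := le_antisymm hba hb
    simp
  -- the tangent line of `x log x` at `a`, evaluated at `b`
  have htangent : b * log a + b - a ≤ b * log b := by
    rcases hb.eq_or_lt with rfl | hb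
    · simp [ha.le]
    have := mul_le_mul_of_nonneg_left (one_sub_inv_le_log_of_pos (div_pos hb ha)) hb.le
    rw [log_div hb.ne' ha.ne', inv_div, mul_sub, mul_div_cancel₀ _ hb.ne'] at this
    linarith
  have hlog : log a ≤ log (1 + a) := log_le_log ha (by linarith)
  nlinarith [mul_le_mul_of_nonneg_left hlog (sub_nonneg.mpr hba)]

lemma abs_mul_log_sub_mul_log_le {a b : ℝ} (ha : 0 ≤ a) (hb : 0 ≤ b) :
    |a * log a - b * log b| ≤ 2 * √|a - b| + |a - b| * (1 + log (1 + a) + log (1 + b)) := by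
  wlog hba : b ≤ a generalizing a b
  · rw [abs_sub_comm, abs_sub_comm a, add_right_comm 1]
    exact this hb ha (le_of_not_ge hba)
  have hla : 0 ≤ log (1 + a) := log_nonneg (by linarith)
  have hlb : 0 ≤ log (1 + b) := log_nonneg (by linarith)
  have hd : 0 ≤ a - b := sub_nonneg.mpr hba
  rw [abs_of_nonneg hd, abs_le]
  constructor
  · have hsuper := mul_log_add_mul_log_le hd hb
    rw [sub_add_cancel] at hsuper
    nlinarith [neg_two_mul_sqrt_le_mul_log hd, mul_nonneg hd hla, mul_nonneg hd hlb]
  · nlinarith [mul_log_sub_mul_log_le hb hba, sqrt_nonneg (a - b), mul_nonneg hd hlb]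

end Real

open Real

namespace MeasureTheory

variable {α : Type*} [MeasurableSpace α] {μ : Measure α}

lemma eLpNorm_two_eq_lintegral_sq (f : α → ℝ) :
    eLpNorm f 2 μ = (∫⁻ x, ENNReal.ofReal (f x ^ 2) ∂μ) ^ (1 / 2 : ℝ) := by
  rw [eLpNorm_eq_lintegral_rpow_enorm_toReal two_ne_zero ENNReal.ofNat_ne_top]
  congr 2 with x
  rw [Real.enorm_eq_ofReal_abs, ENNReal.toReal_ofNat, ENNReal.rpow_two,
    ← ENNReal.ofReal_pow (abs_nonneg _), sq_abs]

lemma eLpNorm_one_eq_one_of_integral_eq_one {g : α → ℝ} (hg0 : 0 ≤ᵐ[μ] g)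
    (hg : ∫ x, g x ∂μ = 1) : eLpNorm g 1 μ = 1 := by
  have hint : Integrable g μ := .of_integral_ne_zero (by simp [hg])
  rw [eLpNorm_one_eq_lintegral_enorm, ← ENNReal.ofReal_one, ← hg,
    ofReal_integral_eq_lintegral_ofReal hint hg0]
  refine lintegral_congr_ae (hg0.mono fun x hx => ?_)
  simp only [Real.enorm_eq_ofReal_abs, abs_of_nonneg (show 0 ≤ g x from hx)]

lemma eLpNorm_log_one_add_le {g : α → ℝ} (hg0 : ∀ x, 0 ≤ g x) :
    eLpNorm (fun x => log (1 + g x)) 2 μ ≤ 2 * eLpNorm g 1 μ ^ (1 / 2 : ℝ) := by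
  have hpt : ∀ x, ‖log (1 + g x)‖ ≤ ((2 : ℝ) • fun x => ‖g x‖ ^ (1 / 2 : ℝ)) x := fun x => by
    rw [Real.norm_of_nonneg (log_nonneg (by linarith [hg0 x])), Pi.smul_apply, smul_eq_mul,
      Real.norm_of_nonneg (hg0 x), ← sqrt_eq_rpow]
    exact log_one_add_le_two_mul_sqrt (hg0 x)
  calc eLpNorm (fun x => log (1 + g x)) 2 μ
      ≤ eLpNorm ((2 : ℝ) • fun x => ‖g x‖ ^ (1 / 2 : ℝ)) 2 μ := eLpNorm_mono_real hpt
    _ = 2 * eLpNorm g 1 μ ^ (1 / 2 : ℝ) := by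
      rw [eLpNorm_const_smul, eLpNorm_norm_rpow _ (by norm_num)]
      have hexp : (2 : ℝ≥0∞) * ENNReal.ofReal (1 / 2) = 1 := by
        rw [← ENNReal.ofReal_ofNat 2, ← ENNReal.ofReal_mul zero_le_two]; norm_num
      rw [hexp, Real.enorm_of_nonneg zero_le_two, ENNReal.ofReal_ofNat]

lemma eLpNorm_sqrt_abs_le [IsProbabilityMeasure μ] {f : α → ℝ} (hf : AEStronglyMeasurable f μ) :
    eLpNorm (fun x => √|f x|) 1 μ ≤ eLpNorm f 2 μ ^ (1 / 2 : ℝ) := by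
  simp_rw [sqrt_eq_rpow, ← Real.norm_eq_abs]
  rw [eLpNorm_norm_rpow _ (by norm_num)]
  gcongr
  exact eLpNorm_le_eLpNorm_of_exponent_le (by norm_num) hf

lemma eLpNorm_mul_log_sub_mul_log_le [IsProbabilityMeasure μ] {g h : α → ℝ}
    (hg : AEMeasurable g μ) (hh : AEMeasurable h μ) (hg0 : ∀ x, 0 ≤ g x) (hh0 : ∀ x, 0 ≤ h x) :
    eLpNorm (fun x => g x * log (g x) - h x * log (h x)) 1 μ ≤
      2 * eLpNorm (g - h) 2 μ ^ (1 / 2 : ℝ) + eLpNorm (g - h) 2 μ *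
        (1 + 2 * eLpNorm g 1 μ ^ (1 / 2 : ℝ) + 2 * eLpNorm h 1 μ ^ (1 / 2 : ℝ)) := by
  set d := g - h
  set w : α → ℝ := fun x => 1 + log (1 + g x) + log (1 + h x)
  have hd : AEStronglyMeasurable d μ := (hg.sub hh).aestronglyMeasurable
  have hlg : AEStronglyMeasurable (fun x => log (1 + g x)) μ :=
    (measurable_log.comp_aemeasurable (aemeasurable_const.add hg)).aestronglyMeasurable
  have hlh : AEStronglyMeasurable (fun x => log (1 + h x)) μ :=
    (measurable_log.comp_aemeasurable (aemeasurable_const.add hh)).aestronglyMeasurable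
  have hw : AEStronglyMeasurable w μ := (aestronglyMeasurable_const.add hlg).add hlh
  have hpt : ∀ x, ‖g x * log (g x) - h x * log (h x)‖ ≤ 2 * √|d x| + |d x| * w x := fun x =>
    abs_mul_log_sub_mul_log_le (hg0 x) (hh0 x)
  have hweight : eLpNorm w 2 μ ≤
      1 + 2 * eLpNorm g 1 μ ^ (1 / 2 : ℝ) + 2 * eLpNorm h 1 μ ^ (1 / 2 : ℝ) := by
    calc eLpNorm w 2 μ ≤ eLpNorm (fun _ => (1 : ℝ)) 2 μ + eLpNorm (fun x => log (1 + g x)) 2 μ +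
          eLpNorm (fun x => log (1 + h x)) 2 μ :=
          (eLpNorm_add_le (by fun_prop) hlh one_le_two).trans
            (add_le_add_left (eLpNorm_add_le (by fun_prop) hlg one_le_two) _)
      _ ≤ _ := by
          gcongr
          · rw [eLpNorm_const _ two_ne_zero (NeZero.ne μ)]; simp
          · exact eLpNorm_log_one_add_le hg0
          · exact eLpNorm_log_one_add_le hh0
  calc eLpNorm (fun x => g x * log (g x) - h x * log (h x)) 1 μ
      ≤ eLpNorm (fun x => 2 * √|d x| + |d x| * w x) 1 μ := eLpNorm_mono_real hpt
    _ ≤ eLpNorm ((2 : ℝ) • fun x => √|d x|) 1 μ + eLpNorm ((fun x => |d x|) • w) 1 μ :=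
        eLpNorm_add_le (by fun_prop) (by fun_prop) le_rfl
    _ ≤ 2 * eLpNorm d 2 μ ^ (1 / 2 : ℝ) + eLpNorm d 2 μ * eLpNorm w 2 μ := by
        rw [eLpNorm_const_smul, Real.enorm_of_nonneg zero_le_two, ENNReal.ofReal_ofNat]
        gcongr
        · exact eLpNorm_sqrt_abs_le hd
        · simpa only [← Real.norm_eq_abs, eLpNorm_norm] using
            eLpNorm_smul_le_mul_eLpNorm (p := 2) (q := 2) hw hd.norm
    _ ≤ _ := by gcongr

lemma Measure.le_withDensity_of_one_le {f : α → ℝ≥0∞} (hf : ∀ᵐ x ∂μ, 1 ≤ f x) :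
    μ ≤ μ.withDensity f := by
  calc μ = μ.withDensity 1 := withDensity_one.symm
    _ ≤ μ.withDensity f := withDensity_mono hf

lemma tendsto_integral_norm_of_tendsto_eLpNorm {ι E : Type*} [NormedAddCommGroup E]
    {l : Filter ι} {F : ι → α → E} (hF : ∀ i, AEStronglyMeasurable (F i) μ)
    (h : Tendsto (fun i => eLpNorm (F i) 1 μ) l (𝓝 0)) :
    Tendsto (fun i => ∫ x, ‖F i x‖ ∂μ) l (𝓝 0) := by
  simp_rw [integral_norm_eq_lintegral_enorm (hF _), ← eLpNorm_one_eq_lintegral_enorm]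
  exact (ENNReal.tendsto_toReal ENNReal.zero_ne_top).comp h

/-- `tendsto_integral_of_L1'` without integrability of `f`: if `f` is not integrable, then
eventually neither is `F i`, and both sides are the junk value `0`. -/
lemma tendsto_integral_of_tendsto_eLpNorm_sub {ι E : Type*} [NormedAddCommGroup E]
    [NormedSpace ℝ E] {l : Filter ι} {F : ι → α → E} {f : α → E}
    (hF : ∀ i, AEStronglyMeasurable (F i) μ) (hf : AEStronglyMeasurable f μ)
    (h : Tendsto (fun i => eLpNorm (F i - f) 1 μ) l (𝓝 0)) :
    Tendsto (fun i => ∫ x, F i x ∂μ) l (𝓝 (∫ x, f x ∂μ)) := by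
  have hsub : ∀ᶠ i in l, Integrable (F i - f) μ :=
    (h.eventually_lt_const ENNReal.zero_lt_top).mono fun i hi =>
      memLp_one_iff_integrable.mp ⟨(hF i).sub hf, hi⟩
  by_cases hfi : Integrable f μ
  · refine tendsto_integral_of_L1' f hf (hsub.mono fun i hi => ?_) h
    simpa using hi.add hfi
  · rw [integral_undef hfi]
    refine tendsto_const_nhds.congr' (hsub.mono fun i hi => ?_)
    refine (integral_undef fun hFi => hfi ?_).symm
    simpa using hFi.sub hi

lemma tendsto_eLpNorm_two_of_le_measure {ι : Type*} {l : Filter ι} {ν : Measure α}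
    (hμν : μ ≤ ν) {F : ι → α → ℝ}
    (h : Tendsto (fun i => ∫⁻ x, ENNReal.ofReal (F i x ^ 2) ∂ν) l (𝓝 0)) :
    Tendsto (fun i => eLpNorm (F i) 2 μ) l (𝓝 0) := by
  have hν := h.ennrpow_const (1 / 2 : ℝ)
  rw [ENNReal.zero_rpow_of_pos one_half_pos] at hν
  refine tendsto_of_tendsto_of_tendsto_of_le_of_le tendsto_const_nhds hν (fun _ => zero_le)
    fun i => ?_
  rw [← eLpNorm_two_eq_lintegral_sq]
  exact eLpNorm_mono_measure _ hμν

lemma tendsto_eLpNorm_mul_log_sub_mul_log [IsProbabilityMeasure μ] {ι : Type*} {l : Filter ι}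
    {G : ι → α → ℝ} {g : α → ℝ} (hGm : ∀ i, AEMeasurable (G i) μ) (hgm : AEMeasurable g μ)
    (hGpos : ∀ i x, 0 ≤ G i x) (hgpos : ∀ x, 0 ≤ g x)
    (hGdens : ∀ i, ∫ x, G i x ∂μ = 1) (hgdens : ∫ x, g x ∂μ = 1)
    (h : Tendsto (fun i => eLpNorm (G i - g) 2 μ) l (𝓝 0)) :
    Tendsto (fun i => eLpNorm (fun x => G i x * log (G i x) - g x * log (g x)) 1 μ) l (𝓝 0) := by
  refine tendsto_of_tendsto_of_tendsto_of_le_of_le tendsto_const_nhds ?_ (fun _ => zero_le)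
    fun i => eLpNorm_mul_log_sub_mul_log_le (hGm i) hgm (hGpos i) hgpos
  simp only [eLpNorm_one_eq_one_of_integral_eq_one (ae_of_all _ (hGpos _)) (hGdens _),
    eLpNorm_one_eq_one_of_integral_eq_one (ae_of_all _ hgpos) hgdens, ENNReal.one_rpow,
    show (1 + 2 * 1 + 2 * 1 : ℝ≥0∞) = 5 by norm_num]
  have hlim := (ENNReal.Tendsto.const_mul (h.ennrpow_const (1 / 2 : ℝ))
    (Or.inr (ENNReal.ofNat_ne_top (n := 2)))).add
      (ENNReal.Tendsto.mul_const h (Or.inr (ENNReal.ofNat_ne_top (n := 5))))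
  simpa [ENNReal.zero_rpow_of_pos one_half_pos] using hlim

end MeasureTheory

theorem entropy_convergence_general {α : Type*} [MeasurableSpace α] (𝕎 : Measure α)
    [IsProbabilityMeasure 𝕎] (Fm : α → ℝ) (hFm0 : ∀ x, 0 ≤ Fm x)
    (G : ℕ → α → ℝ) (G₀ : α → ℝ) (hGm : ∀ n, Measurable (G n)) (hG₀m : Measurable G₀)
    (hGpos : ∀ n x, 0 ≤ G n x) (hG₀pos : ∀ x, 0 ≤ G₀ x)
    (hGdens : ∀ n, ∫ x, G n x ∂𝕎 = 1) (hG₀dens : ∫ x, G₀ x ∂𝕎 = 1)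
    (hL2 : Tendsto
      (fun n => ∫⁻ x, ENNReal.ofReal ((G n x - G₀ x) ^ 2)
        ∂(𝕎.withDensity fun x => ENNReal.ofReal (1 + Fm x)))
      atTop (nhds 0)) :
    Tendsto (fun n => ∫ x, |G n x * Real.log (G n x) - G₀ x * Real.log (G₀ x)| ∂𝕎)
        atTop (nhds 0) ∧
      Tendsto (fun n => ∫ x, G n x * Real.log (G n x) ∂𝕎) atTop
        (nhds (∫ x, G₀ x * Real.log (G₀ x) ∂𝕎)) := by
  have hle : 𝕎 ≤ 𝕎.withDensity fun x => ENNReal.ofReal (1 + Fm x) :=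
    Measure.le_withDensity_of_one_le
      (ae_of_all _ fun x => ENNReal.one_le_ofReal.mpr (le_add_of_nonneg_right (hFm0 x)))
  have hL1 := tendsto_eLpNorm_mul_log_sub_mul_log (fun n => (hGm n).aemeasurable)
    hG₀m.aemeasurable hGpos hG₀pos hGdens hG₀dens
    (tendsto_eLpNorm_two_of_le_measure (F := fun n => G n - G₀) hle hL2)
  have hentropy : ∀ g : α → ℝ, Measurable g →
      AEStronglyMeasurable (fun x => g x * log (g x)) 𝕎 := fun g hg =>
    (continuous_mul_log.measurable.comp hg).aestronglyMeasurable
  refine ⟨?_, tendsto_integral_of_tendsto_eLpNorm_sub (fun n => hentropy _ (hGm n))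
    (hentropy _ hG₀m) hL1⟩
  simpa only [Pi.sub_apply, Real.norm_eq_abs] using tendsto_integral_norm_of_tendsto_eLpNorm
    (fun n => (hentropy _ (hGm n)).sub (hentropy _ hG₀m)) hL1

/-- **Convergence of entropies** (equation (2.9), via Vitali's convergence theorem): if
`G_n → G` in `L²(ν)` where `dν = (1 + F₋) d𝕎` for a probability measure `𝕎` and a
nonnegative integrable `F₋`, and the `G_n`, `G` are probability densities w.r.t. `𝕎`,
then `G_n log G_n → G log G` in `L¹(𝕎)`; in particular the entropies
`∫ G_n log G_n d𝕎` converge to `∫ G log G d𝕎`. -/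
theorem entropy_convergence {α : Type*} [MeasurableSpace α] (𝕎 : Measure α)
    [IsProbabilityMeasure 𝕎] (Fm : α → ℝ) (hFmm : Measurable Fm) (hFm0 : ∀ x, 0 ≤ Fm x)
    (hFmInt : Integrable Fm 𝕎)
    (G : ℕ → α → ℝ) (G₀ : α → ℝ) (hGm : ∀ n, Measurable (G n)) (hG₀m : Measurable G₀)
    (hGpos : ∀ n x, 0 ≤ G n x) (hG₀pos : ∀ x, 0 ≤ G₀ x)
    (hGdens : ∀ n, ∫ x, G n x ∂𝕎 = 1) (hG₀dens : ∫ x, G₀ x ∂𝕎 = 1)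
    (hL2 : Tendsto
      (fun n => ∫⁻ x, ENNReal.ofReal ((G n x - G₀ x) ^ 2)
        ∂(𝕎.withDensity fun x => ENNReal.ofReal (1 + Fm x)))
      atTop (nhds 0)) :
    Tendsto (fun n => ∫ x, |G n x * Real.log (G n x) - G₀ x * Real.log (G₀ x)| ∂𝕎)
        atTop (nhds 0) ∧
      Tendsto (fun n => ∫ x, G n x * Real.log (G n x) ∂𝕎) atTop
        (nhds (∫ x, G₀ x * Real.log (G₀ x) ∂𝕎)) :=
  entropy_convergence_general 𝕎 Fm hFm0 G G₀ hGm hG₀m hGpos hG₀pos hGdens hG₀dens hL2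
end
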